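/- arXiv:0912.2129 — 4 statements merged into one kernel-verified Lean document; each statement's English description precedes it below -/
import Mathlib

section
/- Let Q(z) = ∏_{j=1}^n (z − λ_j) and Q^#(ξ) = ∏_{j=1}^n (ξ − conj(λ_j)), and suppose there exist smooth real functions α(t) > 0, c(t), B(t) such that α'(t)·Q(z)·Q^#(ξ) − c(t)·α(t)·Q'(z)·(Q^#)'(ξ) = B(t)·(α(t)·Q(z)·Q^#(ξ) − 1) for all (z, ξ) ∈ ℂ² and all t in an interval, with c(t) ≠ 0. Then deg Q = 1. -/
open Polynomial

/-!
At a fixed time `t` the identity reads `p·Q(z)·Q^#(ξ) - q·Q'(z)·(Q^#)'(ξ) + B = 0` with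
`p = α' - Bα` and `q = cα ≠ 0`. Freezing `ξ` where `Q^#` does not vanish and comparing the
coefficients of `z^n` forces `p = 0`; freezing `ξ` where `(Q^#)'` does not vanish then shows that
`Q'` is constant, so `deg Q ≤ 1`.
-/

namespace Polynomial

theorem eq_zero_of_forall_eval_add_derivative_eval_add_eq_zero
    {R : Type*} [CommRing R] [IsDomain R] [Infinite R] {P : R[X]} (hP : P.natDegree ≠ 0)
    {u v w : R} (h : ∀ z, u * P.eval z + v * P.derivative.eval z + w = 0) : u = 0 := by
  have hpoly : C u * P + C v * P.derivative + C w = 0 :=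
    Polynomial.funext fun z => by simpa using h z
  have hcoeff := congrArg (coeff · P.natDegree) hpoly
  have hP₀ : P ≠ 0 := by rintro rfl; simp at hP
  simpa [coeff_C, hP, coeff_eq_zero_of_natDegree_lt (natDegree_derivative_lt hP), hP₀]
    using hcoeff

theorem exists_eval_ne_zero {R : Type*} [CommRing R] [IsDomain R] [Infinite R] {P : R[X]}
    (hP : P ≠ 0) : ∃ x, P.eval x ≠ 0 := by
  by_contra! h
  exact hP (Polynomial.funext fun x => by simpa using h x)

theorem natDegree_le_one_of_forall_eval_derivative_eq {K : Type*} [Field K] [CharZero K]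
    {P : K[X]} {k : K} (h : ∀ z, P.derivative.eval z = k) : P.natDegree ≤ 1 := by
  have hconst : P.derivative = C k := Polynomial.funext fun z => by simpa using h z
  have := congrArg natDegree hconst
  rw [natDegree_derivative, natDegree_C] at this
  omega

theorem natDegree_le_one_of_forall_eval_mul_eval {K : Type*} [Field K] [CharZero K]
    {P R : K[X]} (hR : R.derivative ≠ 0) {u v w : K} (hv : v ≠ 0)
    (h : ∀ z ξ, u * P.eval z * R.eval ξ + v * P.derivative.eval z * R.derivative.eval ξ + w = 0) :
    P.natDegree ≤ 1 := by
  by_cases hP : P.natDegree = 0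
  · omega
  obtain ⟨ξ₀, hξ₀⟩ := exists_eval_ne_zero (fun hR₀ : R = 0 => hR (by simp [hR₀]))
  have hu : u * R.eval ξ₀ = 0 :=
    eq_zero_of_forall_eval_add_derivative_eval_add_eq_zero hP
      (v := v * R.derivative.eval ξ₀) (w := w) fun z => by linear_combination h z ξ₀
  have hu₀ : u = 0 := (mul_eq_zero.1 hu).resolve_right hξ₀
  obtain ⟨ξ₁, hξ₁⟩ := exists_eval_ne_zero hR
  refine natDegree_le_one_of_forall_eval_derivative_eq (k := -w / (v * R.derivative.eval ξ₁))
    fun z => ?_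
  rw [eq_div_iff (mul_ne_zero hv hξ₁)]
  linear_combination h z ξ₁ - P.eval z * R.eval ξ₁ * hu₀

end Polynomial

theorem degree_one_of_polarized_identity_general
    (n : ℕ) (hn : 1 ≤ n) (lam : Fin n → ℂ)
    (α c B : ℝ → ℝ) (hαpos : ∀ t, 0 < α t)
    (t₀ t₁ : ℝ) (ht : t₀ < t₁)
    (hc : ∀ t ∈ Set.Ioo t₀ t₁, c t ≠ 0)
    (hid : ∀ t ∈ Set.Ioo t₀ t₁, ∀ z ξ : ℂ,
      ((deriv α t : ℝ) : ℂ) * (∏ j, (z - lam j)) * (∏ j, (ξ - (starRingEnd ℂ) (lam j)))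
        - (c t : ℂ) * (α t : ℂ) *
          ((∏ j, (X - C (lam j)) : Polynomial ℂ).derivative.eval z) *
          ((∏ j, (X - C ((starRingEnd ℂ) (lam j))) : Polynomial ℂ).derivative.eval ξ)
      = (B t : ℂ) * ((α t : ℂ) * (∏ j, (z - lam j)) *
          (∏ j, (ξ - (starRingEnd ℂ) (lam j))) - 1)) :
    n = 1 := by
  obtain ⟨t, ht_mem⟩ := Set.nonempty_Ioo.2 ht
  set Q : ℂ[X] := ∏ j, (X - C (lam j))
  set Qs : ℂ[X] := ∏ j, (X - C ((starRingEnd ℂ) (lam j)))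
  have hQs : Qs.derivative ≠ 0 := by simpa [Qs] using Nat.one_le_iff_ne_zero.1 hn
  have hcα : -((c t : ℂ) * (α t : ℂ)) ≠ 0 :=
    neg_ne_zero.2 (mul_ne_zero (mod_cast hc t ht_mem) (mod_cast (hαpos t).ne'))
  have hid_t : ∀ z ξ, ((deriv α t : ℝ) : ℂ) * Q.eval z * Qs.eval ξ
      - (c t : ℂ) * (α t : ℂ) * Q.derivative.eval z * Qs.derivative.eval ξ
      = (B t : ℂ) * ((α t : ℂ) * Q.eval z * Qs.eval ξ - 1) := fun z ξ => by
    simpa [Q, Qs, eval_prod] using hid t ht_mem z ξ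
  have hdeg : Q.natDegree ≤ 1 :=
    natDegree_le_one_of_forall_eval_mul_eval hQs hcα
      (u := ((deriv α t : ℝ) : ℂ) - B t * α t) (w := B t) fun z ξ => by
        linear_combination hid_t z ξ
  have hQ : Q.natDegree = n := by simp [Q]
  omega

/-- If `α'(t)·Q(z)·Q^#(ξ) − c(t)·α(t)·Q'(z)·(Q^#)'(ξ) = B(t)·(α(t)·Q(z)·Q^#(ξ) − 1)`
holds identically in `(z, ξ)` for `t` in an interval, with `α > 0` and `c ≠ 0`,
then the monic polynomial `Q` has degree one. -/
theorem degree_one_of_polarized_identity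
    (n : ℕ) (hn : 1 ≤ n) (lam : Fin n → ℂ)
    (α c B : ℝ → ℝ) (hα : Differentiable ℝ α) (hαpos : ∀ t, 0 < α t)
    (t₀ t₁ : ℝ) (ht : t₀ < t₁)
    (hc : ∀ t ∈ Set.Ioo t₀ t₁, c t ≠ 0)
    (hid : ∀ t ∈ Set.Ioo t₀ t₁, ∀ z ξ : ℂ,
      ((deriv α t : ℝ) : ℂ) * (∏ j, (z - lam j)) * (∏ j, (ξ - (starRingEnd ℂ) (lam j)))
        - (c t : ℂ) * (α t : ℂ) *
          ((∏ j, (X - C (lam j)) : Polynomial ℂ).derivative.eval z) *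
          ((∏ j, (X - C ((starRingEnd ℂ) (lam j))) : Polynomial ℂ).derivative.eval ξ)
      = (B t : ℂ) * ((α t : ℂ) * (∏ j, (z - lam j)) *
          (∏ j, (ξ - (starRingEnd ℂ) (lam j))) - 1)) :
    n = 1 :=
  degree_one_of_polarized_identity_general n hn lam α c B hαpos t₀ t₁ ht hc hid
end

section
/- Suppose a smooth family of Jordan curves Γ_t parametrized by z(θ, t) satisfies the Polubarinova–Galin equation Im(conj(∂z/∂t)·∂z/∂θ) = 1, and simultaneously Γ_t = {|P(z,t)| = 1} where P ∘ z = e^{inθ}. Then on Γ_t: Re((∂P/∂t)·conj(P)) = −(1/n)·|∂P/∂z|², equivalently d/dt(|P|²) = −(2/n)·|∂P/∂z|² on Γ_t. -/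
open Complex ComplexConjugate

/-! Differentiating `P(z(θ,t),t) = e^{inθ}` in `t` and in `θ` gives `P_t = -P_z z_t` and
`P_z z_θ = i n P`. Eliminating `conj P` between them,
`n P_t conj P = -i |P_z|² z_t conj z_θ`, whose real part is `-|P_z|² Im(conj z_t · z_θ)`, and the
Polubarinova–Galin equation sets this imaginary part to `1`. -/

theorem hasDerivAt_comp_curve_of_eq_sum_mul_pow {F : ℂ → ℝ → ℂ} {a : ℕ → ℝ → ℂ}
    {s : Finset ℕ} (hF : ∀ w u, F w u = ∑ j ∈ s, a j u * w ^ j) {γ : ℝ → ℂ} {t : ℝ}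
    (ha : ∀ j ∈ s, DifferentiableAt ℝ (a j) t) (hγ : DifferentiableAt ℝ γ t) :
    HasDerivAt (fun u => F (γ u) u)
      (deriv (fun u => F (γ t) u) t + deriv (fun w => F w t) (γ t) * deriv γ t) t := by
  have hFt : HasDerivAt (fun u => F (γ t) u) (∑ j ∈ s, deriv (a j) t * γ t ^ j) t := by
    simp only [hF]
    exact HasDerivAt.fun_sum fun j hj => (ha j hj).hasDerivAt.mul_const _
  have hFw : HasDerivAt (fun w => F w t) (∑ j ∈ s, a j t * (j * γ t ^ (j - 1))) (γ t) := by
    simp only [hF]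
    exact HasDerivAt.fun_sum fun j _ => (hasDerivAt_pow j _).const_mul _
  have hpow (j : ℕ) : HasDerivAt (fun u => γ u ^ j) (j * γ t ^ (j - 1) * deriv γ t) t :=
    (hasDerivAt_pow j (γ t)).comp t hγ.hasDerivAt
  rw [hFt.deriv, hFw.deriv, Finset.sum_mul, ← Finset.sum_add_distrib]
  simp only [hF]
  exact HasDerivAt.fun_sum fun j hj =>
    ((ha j hj).hasDerivAt.fun_mul (hpow j)).congr_deriv (by ring)

theorem re_mul_conj_eq_of_im_conj_mul_eq_one {Pt Pz zt zθ p : ℂ} {n : ℝ} (hn : n ≠ 0)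
    (ht : Pt + Pz * zt = 0) (hθ : Pz * zθ = I * n * p) (hPG : (conj zt * zθ).im = 1) :
    (Pt * conj p).re = -(1 / n) * ‖Pz‖ ^ 2 := by
  have hθ' : conj Pz * conj zθ = -I * n * conj p := by
    simpa using congrArg conj hθ
  have key : (n : ℂ) * (Pt * conj p) = -(I * (‖Pz‖ ^ 2 : ℂ)) * (zt * conj zθ) := by
    rw [← mul_conj']
    linear_combination (n * conj p) * ht + (I * Pz * zt) * hθ' - (n * Pz * zt * conj p) * I_sq
  have hre : n * (Pt * conj p).re = -‖Pz‖ ^ 2 := by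
    have hPG' : (zt * conj zθ).im = -1 := by
      rw [← hPG, ← conj_im, map_mul, conj_conj, mul_comm]
    simpa [hPG', ← ofReal_pow, mul_re, mul_im] using congrArg re key
  field_simp
  linear_combination hre

theorem polubarinova_galin_lemniscate_identity_general
    (n : ℕ) (hn : 1 ≤ n) (a : ℕ → ℝ → ℂ) (ha : ∀ j, Differentiable ℝ (a j))
    (z : ℝ → ℝ → ℂ)
    (hzt : ∀ θ, Differentiable ℝ (z θ))
    (hzθ : ∀ t, Differentiable ℝ (fun θ => z θ t))
    (P : ℂ → ℝ → ℂ)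
    (hP : ∀ w t, P w t = ∑ j ∈ Finset.range (n + 1), a j t * w ^ j)
    (hconst : ∀ θ t : ℝ, P (z θ t) t = Complex.exp (Complex.I * n * θ))
    (hPG : ∀ θ t : ℝ,
      ((starRingEnd ℂ) (deriv (fun s => z θ s) t) * deriv (fun θ' => z θ' t) θ).im = 1)
    (θ t : ℝ) :
    (deriv (fun s => P (z θ t) s) t * (starRingEnd ℂ) (P (z θ t) t)).re =
      -(1 / n) * ‖deriv (fun w => P w t) (z θ t)‖ ^ 2 := by
  have hdt := hasDerivAt_comp_curve_of_eq_sum_mul_pow hP (fun j _ => (ha j).differentiableAt)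
    (hzt θ).differentiableAt (t := t)
  have hdθ := hasDerivAt_comp_curve_of_eq_sum_mul_pow (F := fun w _ => P w t)
    (a := fun j _ => a j t) (fun w _ => hP w t) (fun j _ => differentiableAt_const _)
    (hzθ t).differentiableAt (t := θ)
  have hexp : HasDerivAt (fun θ' : ℝ => exp (I * n * θ')) (I * n * exp (I * n * θ)) θ := by
    simpa [mul_comm] using ((hasDerivAt_id (θ : ℂ)).const_mul (I * n)).cexp.comp_ofReal
  simp only [hconst, deriv_const, zero_add] at hdt hdθ
  refine re_mul_conj_eq_of_im_conj_mul_eq_one (Nat.cast_ne_zero.mpr (by omega)) ?_ ?_ (hPG θ t)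
  · exact hdt.unique (hasDerivAt_const t _)
  · rw [hconst]
    exact hdθ.unique hexp

/-- Combining the Polubarinova–Galin equation `Im(z̄ₜ·z_θ) = 1` with the lemniscate
constraint `P(z(θ,t),t) = e^{inθ}`, `|P| = 1` on `Γ_t`, yields
`Re(Pₜ·conj P) = −(1/n)·|P_z|²`, i.e. `d/dt |P|² = −(2/n)|P_z|²` on `Γ_t`. -/
theorem polubarinova_galin_lemniscate_identity
    (n : ℕ) (hn : 1 ≤ n) (a : ℕ → ℝ → ℂ) (ha : ∀ j, Differentiable ℝ (a j))
    (z : ℝ → ℝ → ℂ)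
    (hzt : ∀ θ, Differentiable ℝ (z θ))
    (hzθ : ∀ t, Differentiable ℝ (fun θ => z θ t))
    (P : ℂ → ℝ → ℂ)
    (hP : ∀ w t, P w t = ∑ j ∈ Finset.range (n + 1), a j t * w ^ j)
    (hconst : ∀ θ t : ℝ, P (z θ t) t = Complex.exp (Complex.I * n * θ))
    (habs : ∀ θ t : ℝ, ‖P (z θ t) t‖ = 1)
    (hPG : ∀ θ t : ℝ,
      ((starRingEnd ℂ) (deriv (fun s => z θ s) t) * deriv (fun θ' => z θ' t) θ).im = 1)
    (θ t : ℝ) :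
    (deriv (fun s => P (z θ t) s) t * (starRingEnd ℂ) (P (z θ t) t)).re =
      -(1 / n) * ‖deriv (fun w => P w t) (z θ t)‖ ^ 2 :=
  polubarinova_galin_lemniscate_identity_general n hn a ha z hzt hzθ P hP hconst hPG θ t
end

section
/- Let P(z,t) = a(t)·∏_{j=1}^n (z − λ_j(t)) with distinct roots λ_j(t), and suppose the polarized identity 2Re(a'/a) − ∑_j [k_j·λ_j'/(z−λ_j) + k_j·conj(λ_j')/(ξ−conj(λ_j))] − c(t)·[∑_j k_j/(z−λ_j)]·[∑_j k_j/(ξ−conj(λ_j))] = B(t)·(1 − 1/(P(z,t)·P^#(ξ,t))) holds for all (z, ξ) away from poles. Then λ_j'(t) = 0 for every j, i.e., all roots are stationary. -/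
/-!
Send `ξ → ∞` in the polarized identity: every term involving `ξ` tends to `0`, because the
product `∏ (ξ - conj λᵢ)^kᵢ` blows up, and what is left says that `∑ kᵢ λᵢ' / (z - λᵢ)` is a
constant function of `z`. Multiplying by `z - λⱼ` and letting `z → λⱼ` extracts the residue
`kⱼ λⱼ'`, which must therefore vanish.
-/

open Filter Topology Bornology

section PartialFractions

variable {ι 𝕜 : Type*} [Fintype ι] [NontriviallyNormedField 𝕜]

lemma tendsto_inv_sub_cobounded (w : 𝕜) :
    Tendsto (fun ξ : 𝕜 => (ξ - w)⁻¹) (cobounded 𝕜) (𝓝 0) :=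
  tendsto_inv₀_cobounded.comp (tendsto_sub_const_cobounded w)

lemma tendsto_sum_div_sub_cobounded (c w : ι → 𝕜) :
    Tendsto (fun ξ => ∑ i, c i / (ξ - w i)) (cobounded 𝕜) (𝓝 0) := by
  simpa [div_eq_mul_inv] using
    tendsto_finsetSum Finset.univ fun i _ => (tendsto_inv_sub_cobounded (w i)).const_mul (c i)

lemma tendsto_inv_prod_sub_pow_cobounded (w : ι → 𝕜) {k : ι → ℕ} {j : ι} (hj : k j ≠ 0) :
    Tendsto (fun ξ => (∏ i, (ξ - w i) ^ k i)⁻¹) (cobounded 𝕜) (𝓝 0) := by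
  have h := tendsto_finsetProd Finset.univ fun i _ => (tendsto_inv_sub_cobounded (w i)).pow (k i)
  rw [Finset.prod_eq_zero (Finset.mem_univ j) (zero_pow hj)] at h
  simpa [inv_pow, Finset.prod_inv_distrib] using h

lemma sub_sum_eq_of_polarized_identity {A B U P Q : 𝕜} {p q r w : ι → 𝕜} {k : ι → ℕ} {j : ι}
    (hj : k j ≠ 0)
    (h : ∀ ξ, (∀ i, ξ ≠ w i) →
      A - ∑ i, (p i + q i / (ξ - w i)) - U * ∑ i, r i / (ξ - w i)
        = B * (1 - 1 / (P * (Q * ∏ i, (ξ - w i) ^ k i)))) :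
    A - ∑ i, p i = B := by
  have hlhs : Tendsto (fun ξ => A - ∑ i, (p i + q i / (ξ - w i)) - U * ∑ i, r i / (ξ - w i))
      (cobounded 𝕜) (𝓝 (A - ∑ i, p i)) := by
    simp only [Finset.sum_add_distrib]
    simpa using (tendsto_const_nhds.sub (tendsto_const_nhds.add
      (tendsto_sum_div_sub_cobounded q w))).sub ((tendsto_sum_div_sub_cobounded r w).const_mul U)
  have hrhs : Tendsto (fun ξ => B * (1 - 1 / (P * (Q * ∏ i, (ξ - w i) ^ k i))))
      (cobounded 𝕜) (𝓝 B) := by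
    have h := ((tendsto_inv_prod_sub_pow_cobounded w hj).const_mul (P * Q)⁻¹).const_sub 1
    simpa [mul_inv, mul_assoc, mul_comm] using h.const_mul B
  exact tendsto_nhds_unique
    (hlhs.congr' ((eventually_all.2 fun i => eventually_ne_cobounded (w i)).mono h)) hrhs

lemma eventually_nhdsNE_forall_ne {w : ι → 𝕜} (hw : Function.Injective w) (j : ι) :
    ∀ᶠ z in 𝓝[≠] w j, ∀ i, z ≠ w i :=
  eventually_all.2 fun i => by
    by_cases hij : i = j
    · exact hij ▸ self_mem_nhdsWithin
    · exact (eventually_ne_nhds (hw.ne (Ne.symm hij))).filter_mono nhdsWithin_le_nhds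

lemma eq_zero_of_sum_div_sub_eq_const {w c : ι → 𝕜} (hw : Function.Injective w) {K : 𝕜}
    (h : ∀ z, (∀ i, z ≠ w i) → ∑ i, c i / (z - w i) = K) (j : ι) : c j = 0 := by
  classical
  -- `(z - w j) * ∑ i, c i / (z - w i)` extended continuously across the pole `w j`
  set F : 𝕜 → 𝕜 := fun z => c j + ∑ i ∈ Finset.univ.erase j, c i * (z - w j) / (z - w i)
  have hF : Tendsto F (𝓝 (w j)) (𝓝 (c j)) := by
    have h : Tendsto F (𝓝 (w j))
        (𝓝 (c j + ∑ i ∈ Finset.univ.erase j, c i * (w j - w j) / (w j - w i))) :=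
      tendsto_const_nhds.add <| tendsto_finsetSum _ fun i hi =>
        (tendsto_const_nhds.mul (tendsto_id.sub_const (w j))).div (tendsto_id.sub_const (w i))
          (sub_ne_zero.2 (hw.ne (Finset.ne_of_mem_erase hi).symm))
    simpa using h
  have hFeq : ∀ᶠ z in 𝓝[≠] w j, (z - w j) * K = F z := by
    filter_upwards [eventually_nhdsNE_forall_ne hw j] with z hz
    have hzj : z - w j ≠ 0 := sub_ne_zero.2 (hz j)
    rw [← h z hz, Finset.mul_sum, ← Finset.add_sum_erase _ _ (Finset.mem_univ j)]
    congr 1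
    · field_simp
    · exact Finset.sum_congr rfl fun i _ => by ring
  have hK : Tendsto (fun z => (z - w j) * K) (𝓝 (w j)) (𝓝 ((w j - w j) * K)) :=
    (tendsto_id.sub_const (w j)).mul_const K
  rw [sub_self, zero_mul] at hK
  exact tendsto_nhds_unique ((hK.mono_left nhdsWithin_le_nhds).congr' hFeq)
    (hF.mono_left nhdsWithin_le_nhds) |>.symm

end PartialFractions

theorem roots_are_stationary_general
    (m : ℕ) (a : ℝ → ℂ)
    (lam : Fin m → ℝ → ℂ)
    (hdist : ∀ t : ℝ, Function.Injective (fun j => lam j t))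
    (k : Fin m → ℕ) (hk : ∀ j, 1 ≤ k j)
    (c B : ℝ → ℝ)
    (hid : ∀ t : ℝ, ∀ z ξ : ℂ, (∀ j, z ≠ lam j t) → (∀ j, ξ ≠ (starRingEnd ℂ) (lam j t)) →
      ((2 * (deriv a t / a t).re : ℝ) : ℂ)
        - (∑ j, ((k j : ℂ) * deriv (fun s => lam j s) t / (z - lam j t)
            + (k j : ℂ) * (starRingEnd ℂ) (deriv (fun s => lam j s) t) /
                (ξ - (starRingEnd ℂ) (lam j t))))
        - (c t : ℂ) * (∑ j, (k j : ℂ) / (z - lam j t)) *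
            (∑ j, (k j : ℂ) / (ξ - (starRingEnd ℂ) (lam j t)))
      = (B t : ℂ) * (1 - 1 /
          ((a t * ∏ j, (z - lam j t) ^ (k j)) *
           ((starRingEnd ℂ) (a t) * ∏ j, (ξ - (starRingEnd ℂ) (lam j t)) ^ (k j))))) :
    ∀ (j : Fin m) (t : ℝ), deriv (fun s => lam j s) t = 0 := by
  intro j t
  have hkj : k j ≠ 0 := Nat.one_le_iff_ne_zero.1 (hk j)
  have hconst : ∀ z : ℂ, (∀ i, z ≠ lam i t) →
      ∑ i, (k i : ℂ) * deriv (fun s => lam i s) t / (z - lam i t)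
        = ((2 * (deriv a t / a t).re : ℝ) : ℂ) - B t := fun z hz => by
    linear_combination -sub_sum_eq_of_polarized_identity hkj (hid t z · hz)
  simpa [hkj] using eq_zero_of_sum_div_sub_eq_const (hdist t) hconst j

/-- If the polarized identity (2.14) of the paper holds for all `(z, ξ)` away from the
poles, then all the roots `λⱼ(t)` are stationary: `λⱼ'(t) = 0`. -/
theorem roots_are_stationary
    (m : ℕ) (a : ℝ → ℂ) (ha : Differentiable ℝ a) (ha0 : ∀ t, a t ≠ 0)
    (lam : Fin m → ℝ → ℂ) (hlam : ∀ j, Differentiable ℝ (lam j))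
    (hdist : ∀ t : ℝ, Function.Injective (fun j => lam j t))
    (k : Fin m → ℕ) (hk : ∀ j, 1 ≤ k j)
    (c B : ℝ → ℝ)
    (hid : ∀ t : ℝ, ∀ z ξ : ℂ, (∀ j, z ≠ lam j t) → (∀ j, ξ ≠ (starRingEnd ℂ) (lam j t)) →
      ((2 * (deriv a t / a t).re : ℝ) : ℂ)
        - (∑ j, ((k j : ℂ) * deriv (fun s => lam j s) t / (z - lam j t)
            + (k j : ℂ) * (starRingEnd ℂ) (deriv (fun s => lam j s) t) /
                (ξ - (starRingEnd ℂ) (lam j t))))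
        - (c t : ℂ) * (∑ j, (k j : ℂ) / (z - lam j t)) *
            (∑ j, (k j : ℂ) / (ξ - (starRingEnd ℂ) (lam j t)))
      = (B t : ℂ) * (1 - 1 /
          ((a t * ∏ j, (z - lam j t) ^ (k j)) *
           ((starRingEnd ℂ) (a t) * ∏ j, (ξ - (starRingEnd ℂ) (lam j t)) ^ (k j))))) :
    ∀ (j : Fin m) (t : ℝ), deriv (fun s => lam j s) t = 0 :=
  roots_are_stationary_general m a lam hdist k hk c B hid
end

section
/- A polynomial lemniscate {z : |P(z)| = 1} for a polynomial P of degree n ≥ 2 with at least two distinct roots, all inside the lemniscate, cannot coincide with a circle. -/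
/-!
If `|P| = 1` on the circle `|z - c| = r`, then `P · P^*` agrees with `(z - c)^n` on that circle,
where `P^*` is the reflection of `P` in the circle (built from the conjugated roots, so that
`P^*(z) = (z - c)^n · conj (P z)` there). A circle is infinite, so `P · P^* = (X - c)^n` as
polynomials, and every root of `P` is a root of `(X - c)^n`, i.e. equals `c`. Two distinct roots
are therefore impossible.
-/

open Complex Polynomial Metric ComplexConjugate

theorem Complex.infinite_sphere (c : ℂ) {r : ℝ} (hr : 0 < r) : (sphere c r).Infinite := by
  have hconn : IsConnected (sphere c r) :=
    isConnected_sphere (by simp [Complex.rank_real_complex]) c hr.le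
  refine hconn.isPreconnected.infinite_of_nontrivial ⟨c + r, ?_, c - r, ?_, ?_⟩
  · simp [hr.le]
  · simp [hr.le]
  · rw [Ne, sub_eq_add_neg, add_right_inj, eq_neg_iff_add_eq_zero, ← two_mul]
    simp [hr.ne']

section CircleReflection

variable {ι : Type*} [Fintype ι]

noncomputable def circleReflection (μ : ι → ℂ) (c : ℂ) (r : ℝ) : ℂ[X] :=
  ∏ i, (C ((r : ℂ) ^ 2) - C (conj (μ i - c)) * (X - C c))

theorem eval_circleReflection (μ : ι → ℂ) {c z : ℂ} {r : ℝ} (hz : z ∈ sphere c r) :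
    (circleReflection μ c r).eval z = (z - c) ^ Fintype.card ι * conj (∏ i, (z - μ i)) := by
  have hsq : (z - c) * conj (z - c) = (r : ℂ) ^ 2 := by
    rw [mul_conj', ← dist_eq, mem_sphere.mp hz]
  have hfactor : ∀ i, (r : ℂ) ^ 2 - conj (μ i - c) * (z - c) = (z - c) * conj (z - μ i) := by
    intro i
    simp only [map_sub] at hsq ⊢
    linear_combination -hsq
  simp only [circleReflection, eval_prod, eval_sub, eval_mul, eval_C, eval_X, hfactor,
    Finset.prod_mul_distrib, Finset.prod_const, Finset.card_univ, map_prod]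

theorem mul_circleReflection_eq_pow {a c : ℂ} {r : ℝ} (hr : 0 < r) {μ : ι → ℂ}
    (h : ∀ z ∈ sphere c r, ‖a * ∏ i, (z - μ i)‖ = 1) :
    (C a * ∏ i, (X - C (μ i))) * (C (conj a) * circleReflection μ c r) =
      (X - C c) ^ Fintype.card ι := by
  refine eq_of_infinite_eval_eq _ _ ((Complex.infinite_sphere c hr).mono fun z hz => ?_)
  have hnorm : (a * ∏ i, (z - μ i)) * conj (a * ∏ i, (z - μ i)) = 1 := by
    rw [mul_conj', h z hz, ofReal_one, one_pow]
  simp only [Set.mem_ofPred_eq, eval_mul, eval_C, eval_prod, eval_sub, eval_X, eval_pow,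
    eval_circleReflection μ hz]
  rw [map_mul] at hnorm
  linear_combination (z - c) ^ Fintype.card ι * hnorm

theorem eq_center_of_norm_prod_eq_one_on_sphere {a c : ℂ} {r : ℝ} (hr : 0 < r) {μ : ι → ℂ}
    (h : ∀ z ∈ sphere c r, ‖a * ∏ i, (z - μ i)‖ = 1) (i : ι) : μ i = c := by
  have hroot := congr_arg (eval (μ i)) (mul_circleReflection_eq_pow hr h)
  rw [eval_mul, eval_mul, eval_prod, Finset.prod_eq_zero (Finset.mem_univ i) (by simp),
    mul_zero, zero_mul, eval_pow, eval_sub, eval_X, eval_C] at hroot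
  exact sub_eq_zero.mp (eq_zero_of_pow_eq_zero hroot.symm)

end CircleReflection

theorem lemniscate_not_circle_general
    (n : ℕ) (a : ℂ) (lam : Fin n → ℂ)
    (hdist : ∃ i j : Fin n, lam i ≠ lam j) :
    ∀ (c : ℂ) (r : ℝ), 0 < r →
      {z : ℂ | ‖a * ∏ i, (z - lam i)‖ = 1} ≠ Metric.sphere c r := by
  intro c r hr h
  obtain ⟨i, j, hij⟩ := hdist
  have hcenter := eq_center_of_norm_prod_eq_one_on_sphere hr h.symm.subset
  exact hij ((hcenter i).trans (hcenter j).symm)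

/-- A polynomial lemniscate `{|P| = 1}`, for `P` of degree `n ≥ 2` with at least two
distinct roots, all lying inside the lemniscate, is never a circle. -/
theorem lemniscate_not_circle
    (n : ℕ) (hn : 2 ≤ n) (a : ℂ) (ha : a ≠ 0) (lam : Fin n → ℂ)
    (hdist : ∃ i j : Fin n, lam i ≠ lam j)
    (hinside : ∀ j, ‖a * ∏ i, (lam j - lam i)‖ < 1) :
    ∀ (c : ℂ) (r : ℝ), 0 < r →
      {z : ℂ | ‖a * ∏ i, (z - lam i)‖ = 1} ≠ Metric.sphere c r :=
  lemniscate_not_circle_general n a lam hdist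
end
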